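/- arXiv:1209.0412 — 8 statements merged into one kernel-verified Lean document; each statement's English description precedes it below -/
import Mathlib

section
/- Let K be a number field with [K:ℚ] = 4 that is totally imaginary (i.e., no field embedding K → ℂ has image contained in ℝ). Let τ₁, τ₂ : K → ℂ be field embeddings such that τ₂ ≠ τ₁ and τ₂ is not the complex conjugate of τ₁. Let R > 0 and let z₁, z₂ be algebraic integers of K with z₁ ≠ z₂, |τ₂(z₁)| ≤ R, and |τ₂(z₂)| ≤ R. Then |τ₁(z₁) − τ₁(z₂)| ≥ 1/(2R). -/
/-!
The difference `x = z₁ - z₂` is a nonzero algebraic integer, so `|N(x)| ≥ 1`. A totally imaginary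
quartic field has exactly two infinite places, and the hypotheses on `τ₂` say that `τ₁` and `τ₂`
induce different ones; each being complex, `|N(x)| = (‖τ₁ x‖ ‖τ₂ x‖)²`. Hence
`1 ≤ ‖τ₁ x‖ ‖τ₂ x‖ ≤ 2R ‖τ₁ x‖`.
-/

open NumberField

namespace NumberField

theorem isTotallyComplex_of_forall_range_not_subset_real {K : Type*} [Field K]
    (h : ∀ τ : K →+* ℂ, ¬ Set.range τ ⊆ Set.range (Complex.ofReal : ℝ → ℂ)) :
    IsTotallyComplex K where
  isComplex w := by
    rw [← InfinitePlace.not_isReal_iff_isComplex, ← w.mk_embedding, InfinitePlace.isReal_mk_iff]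
    rintro hreal
    refine h w.embedding ?_
    rintro _ ⟨x, rfl⟩
    exact ⟨hreal.embedding x, hreal.coe_embedding_apply x⟩

theorem RingOfIntegers.one_le_abs_norm {K : Type*} [Field K] [NumberField K] {x : 𝓞 K}
    (hx : x ≠ 0) : (1 : ℝ) ≤ |(Algebra.norm ℚ (x : K) : ℝ)| := by
  rw [← Algebra.coe_norm_int]
  exact_mod_cast Int.one_le_abs (Algebra.norm_ne_zero_iff.mpr hx)

namespace InfinitePlace

variable {K : Type*} [Field K] [NumberField K] [IsTotallyComplex K]

theorem card_eq_two_of_isTotallyComplex_of_finrank_eq_four (hdeg : Module.finrank ℚ K = 4) :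
    Fintype.card (InfinitePlace K) = 2 := by
  have := IsTotallyComplex.finrank (K := K)
  rw [card_eq_nrRealPlaces_add_nrComplexPlaces, IsTotallyComplex.nrRealPlaces_eq_zero]
  omega

theorem sq_norm_mul_norm_eq_abs_norm (hdeg : Module.finrank ℚ K = 4) {τ₁ τ₂ : K →+* ℂ}
    (h : mk τ₁ ≠ mk τ₂) (x : K) :
    (‖τ₁ x‖ * ‖τ₂ x‖) ^ 2 = |(Algebra.norm ℚ x : ℝ)| := by
  classical
  have huniv : (Finset.univ : Finset (InfinitePlace K)) = {mk τ₁, mk τ₂} := by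
    refine (Finset.eq_univ_of_card {mk τ₁, mk τ₂} ?_).symm
    rw [Finset.card_pair h, card_eq_two_of_isTotallyComplex_of_finrank_eq_four hdeg]
  rw [← Rat.cast_abs, ← prod_eq_abs_norm, huniv, Finset.prod_pair h]
  simp only [IsTotallyComplex.mult_eq, apply]
  ring

end InfinitePlace

end NumberField

theorem stmt_0_general (K : Type*) [Field K] [NumberField K]
    (hdeg : Module.finrank ℚ K = 4)
    (hTI : ∀ τ : K →+* ℂ, ¬ Set.range τ ⊆ Set.range (Complex.ofReal : ℝ → ℂ))
    (τ₁ τ₂ : K →+* ℂ) (hne : τ₂ ≠ τ₁)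
    (hconj : τ₂ ≠ (starRingEnd ℂ).comp τ₁)
    (R : ℝ)
    (z₁ z₂ : 𝓞 K) (hz : z₁ ≠ z₂)
    (h₁ : ‖τ₂ (z₁ : K)‖ ≤ R) (h₂ : ‖τ₂ (z₂ : K)‖ ≤ R) :
    1 / (2 * R) ≤ ‖τ₁ (z₁ : K) - τ₁ (z₂ : K)‖ := by
  have := isTotallyComplex_of_forall_range_not_subset_real hTI
  have hplaces : InfinitePlace.mk τ₁ ≠ InfinitePlace.mk τ₂ := by
    rw [Ne, InfinitePlace.mk_eq_iff, not_or]
    exact ⟨hne.symm, hconj.symm⟩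
  set x : K := ((z₁ - z₂ : 𝓞 K) : K)
  have hx₁ : τ₁ x = τ₁ z₁ - τ₁ z₂ := by simp [x]
  have hx₂ : ‖τ₂ x‖ ≤ 2 * R := by
    simpa [x, two_mul] using (norm_sub_le _ _).trans (add_le_add h₁ h₂)
  have hprod : 1 ≤ ‖τ₁ x‖ * ‖τ₂ x‖ := by
    rw [← one_le_sq_iff₀ (by positivity),
      InfinitePlace.sq_norm_mul_norm_eq_abs_norm hdeg hplaces]
    exact RingOfIntegers.one_le_abs_norm (sub_ne_zero.mpr hz)
  rw [← hx₁]
  refine div_le_of_le_mul₀ ((norm_nonneg _).trans hx₂) (norm_nonneg _) ?_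
  exact hprod.trans (mul_le_mul_of_nonneg_left hx₂ (norm_nonneg _))

/-- Let `K` be a totally imaginary quartic number field, `τ₁ τ₂ : K → ℂ` embeddings with
`τ₂ ≠ τ₁` and `τ₂` not the complex conjugate of `τ₁`. If `z₁ ≠ z₂` are algebraic integers
of `K` with `|τ₂ z₁| ≤ R` and `|τ₂ z₂| ≤ R` for some `R > 0`, then
`|τ₁ z₁ - τ₁ z₂| ≥ 1 / (2 * R)`. -/
theorem stmt_0 (K : Type*) [Field K] [NumberField K]
    (hdeg : Module.finrank ℚ K = 4)
    (hTI : ∀ τ : K →+* ℂ, ¬ Set.range τ ⊆ Set.range (Complex.ofReal : ℝ → ℂ))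
    (τ₁ τ₂ : K →+* ℂ) (hne : τ₂ ≠ τ₁)
    (hconj : τ₂ ≠ (starRingEnd ℂ).comp τ₁)
    (R : ℝ) (hR : 0 < R)
    (z₁ z₂ : 𝓞 K) (hz : z₁ ≠ z₂)
    (h₁ : ‖τ₂ (z₁ : K)‖ ≤ R) (h₂ : ‖τ₂ (z₂ : K)‖ ≤ R) :
    1 / (2 * R) ≤ ‖τ₁ (z₁ : K) - τ₁ (z₂ : K)‖ :=
  stmt_0_general K hdeg hTI τ₁ τ₂ hne hconj R z₁ z₂ hz h₁ h₂
end

section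
/- Let K be a number field with [K:ℚ] = 4 that is totally imaginary, let τ₁, τ₂ : K → ℂ be field embeddings such that τ₂ ≠ τ₁ and τ₂ is not the complex conjugate of τ₁, and let B ⊆ ℂ be a bounded set. Then the set τ₁({z ∈ 𝓞_K : τ₂(z) ∈ B}) is a discrete subset of ℂ, i.e., every point of ℂ has a neighborhood containing at most one point of this set. -/
open NumberField

/-- Let `K` be a totally imaginary quartic number field, `τ₁ τ₂ : K → ℂ` embeddings with
`τ₂ ≠ τ₁` and `τ₂` not the complex conjugate of `τ₁`, and `B ⊆ ℂ` a bounded set. Then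
`τ₁ {z ∈ 𝓞 K | τ₂ z ∈ B}` is discrete: every point of `ℂ` has a neighborhood containing
at most one point of this set. -/
theorem stmt_1 (K : Type*) [Field K] [NumberField K]
    (hdeg : Module.finrank ℚ K = 4)
    (hTI : ∀ τ : K →+* ℂ, ¬ Set.range τ ⊆ Set.range (Complex.ofReal : ℝ → ℂ))
    (τ₁ τ₂ : K →+* ℂ) (hne : τ₂ ≠ τ₁)
    (hconj : τ₂ ≠ (starRingEnd ℂ).comp τ₁)
    (B : Set ℂ) (hB : Bornology.IsBounded B)
    (D : Set ℂ) (hD : D = (fun z : 𝓞 K => τ₁ (z : K)) '' {z : 𝓞 K | τ₂ (z : K) ∈ B}) :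
    ∀ c : ℂ, ∃ U ∈ nhds c, (U ∩ D).Subsingleton := by
  classical
  subst hD
  set cj : (K →+* ℂ) → (K →+* ℂ) := fun τ => (starRingEnd ℂ).comp τ with hcjdef
  have hcc : ∀ τ : K →+* ℂ, cj (cj τ) = τ := by
    intro τ; ext x; simp [cj]
  have hcjinj : Function.Injective cj := by
    intro a b h
    have := congrArg cj h
    rwa [hcc, hcc] at this
  -- no embedding equals its own conjugate
  have hself : ∀ τ : K →+* ℂ, cj τ ≠ τ := by
    intro τ h
    apply hTI τ
    rintro _ ⟨x, rfl⟩
    have hx : (starRingEnd ℂ) (τ x) = τ x := RingHom.congr_fun h x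
    exact ⟨(τ x).re, Complex.conj_eq_iff_re.mp hx⟩
  -- distinctness facts
  have d1 : τ₁ ≠ cj τ₁ := (hself τ₁).symm
  have d2 : τ₁ ≠ τ₂ := hne.symm
  have d3 : τ₁ ≠ cj τ₂ := by
    intro h
    exact hconj (by rw [← hcc τ₂, ← h])
  have d4 : cj τ₁ ≠ τ₂ := fun h => hconj h.symm
  have d5 : cj τ₁ ≠ cj τ₂ := fun h => hne (hcjinj h).symm
  have d6 : τ₂ ≠ cj τ₂ := (hself τ₂).symm
  -- the four embeddings exhaust all embeddings
  have hFin : Fintype.card (K →+* ℂ) = 4 := by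
    rw [Embeddings.card K ℂ, hdeg]
  have hcardS : ({τ₁, cj τ₁, τ₂, cj τ₂} : Finset (K →+* ℂ)).card = 4 := by
    rw [Finset.card_insert_of_notMem (by simp [d1, d2, d3]),
      Finset.card_insert_of_notMem (by simp [d4, d5]),
      Finset.card_insert_of_notMem (by simp [d6]), Finset.card_singleton]
  have huniv : ∀ φ : K →+* ℂ, φ = τ₁ ∨ φ = cj τ₁ ∨ φ = τ₂ ∨ φ = cj τ₂ := by
    intro φ
    have h := Finset.eq_univ_of_card ({τ₁, cj τ₁, τ₂, cj τ₂} : Finset (K →+* ℂ))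
      (by rw [hcardS, hFin])
    have : φ ∈ ({τ₁, cj τ₁, τ₂, cj τ₂} : Finset (K →+* ℂ)) := h ▸ Finset.mem_univ φ
    simpa using this
  have hcjnorm : ∀ (τ : K →+* ℂ) (x : K), ‖cj τ x‖ = ‖τ x‖ := by
    intro τ x
    simp [cj]
  intro c
  obtain ⟨R, hR⟩ := hB.exists_norm_le
  set M := max R (‖c‖ + 1) with hM
  have hGfin : (τ₁ '' {x : K | IsIntegral ℤ x ∧ ∀ φ : K →+* ℂ, ‖φ x‖ ≤ M}).Finite :=
    (Embeddings.finite_of_norm_le K ℂ M).image _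
  set G : Set ℂ := τ₁ '' {x : K | IsIntegral ℤ x ∧ ∀ φ : K →+* ℂ, ‖φ x‖ ≤ M} with hG
  -- points of D within distance 1 of c lie in G
  have hDG : ∀ w ∈ (fun z : 𝓞 K => τ₁ (z : K)) '' {z : 𝓞 K | τ₂ (z : K) ∈ B},
      ‖w - c‖ ≤ 1 → w ∈ G := by
    rintro _ ⟨z, hz, rfl⟩ hw
    refine ⟨(z : K), ⟨RingOfIntegers.isIntegral_coe z, ?_⟩, rfl⟩
    have h1 : ‖τ₁ (z : K)‖ ≤ M := by
      have : ‖τ₁ (z : K)‖ ≤ ‖τ₁ (z : K) - c‖ + ‖c‖ := by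
        simpa using norm_add_le (τ₁ (z : K) - c) c
      refine le_trans this (le_trans ?_ (le_max_right _ _))
      linarith
    have h2 : ‖τ₂ (z : K)‖ ≤ M := le_trans (hR _ hz) (le_max_left _ _)
    intro φ
    rcases huniv φ with h | h | h | h <;> subst h
    · exact h1
    · rw [hcjnorm]; exact h1
    · exact h2
    · rw [hcjnorm]; exact h2
  -- choose a ball around c avoiding G \ {c}
  have hclosed : IsClosed (G \ {c}) := (hGfin.subset Set.diff_subset).isClosed
  have hcmem : c ∈ (G \ {c})ᶜ := by simp
  obtain ⟨ε, hε, hball⟩ := Metric.isOpen_iff.mp hclosed.isOpen_compl c hcmem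
  refine ⟨Metric.ball c (min ε 1), Metric.ball_mem_nhds c (lt_min hε one_pos), ?_⟩
  have key : ∀ w, w ∈ Metric.ball c (min ε 1) ∩
      ((fun z : 𝓞 K => τ₁ (z : K)) '' {z : 𝓞 K | τ₂ (z : K) ∈ B}) → w = c := by
    rintro w ⟨hw1, hw2⟩
    have hdist : dist w c < min ε 1 := Metric.mem_ball.mp hw1
    have hwG : w ∈ G := hDG w hw2 (by
      have : dist w c ≤ 1 := le_of_lt (lt_of_lt_of_le hdist (min_le_right _ _))
      simpa [dist_eq_norm] using this)
    have hwb : w ∈ Metric.ball c ε :=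
      Metric.mem_ball.mpr (lt_of_lt_of_le hdist (min_le_left _ _))
    have := hball hwb
    by_contra hwc
    exact this ⟨hwG, hwc⟩
  intro x hx y hy
  rw [key x hx, key y hy]
end

section
/- Let K = ℚ(ζ₅) with ring of integers 𝓞, let σ : K → ℂ be the embedding with σ(ζ₅) = exp(4πi/5), and let S = {z ∈ 𝓞 : |σ(z)| ≤ 1}. For every z ∈ S there exists an integer j with 0 ≤ j ≤ 9 such that z + (−ζ₅³)^j ∈ S; here −ζ₅³ is a primitive tenth root of unity in 𝓞. In particular, for every z ∈ S there exists z' ∈ S with z' ≠ z and such that z' − z is a tenth root of unity, so |ι(z') − ι(z)| = 1 for the embedding ι with ι(ζ₅) = exp(2πi/5). -/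
/-!
Write `w = σ z` with `‖w‖ ≤ 1` and let `u` be the tenth root of unity closest in angle to `-w`.
The angle `c` between `u` and `-w` is at most `π / 10 ≤ π / 3`, so
`‖w + u‖² = 1 - 2 ‖w‖ cos c + ‖w‖² ≤ 1`. Since `σ (-ζ ^ 3) = -(σ ζ) ^ 3` is a primitive tenth root
of unity, `u = σ ((-ζ ^ 3) ^ i)` for some `i < 10`. The difference `z' - z = (-ζ ^ 3) ^ i` is a
root of unity, so its image under any embedding has absolute value `1`.
-/

open NumberField Complex
open scoped Real

theorem IsPrimitiveRoot.neg_of_odd {R : Type*} [CommRing R] [Nontrivial R] (p : ℕ) [CharP R p]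
    (hp : p ≠ 2) {ζ : R} {k : ℕ} (h : IsPrimitiveRoot ζ k) (hk : Odd k) :
    IsPrimitiveRoot (-ζ) (2 * k) := by
  have h₂ := (IsPrimitiveRoot.neg_one (R := R) p hp).eq_orderOf
  rw [IsPrimitiveRoot.iff_orderOf, neg_eq_neg_one_mul,
    (Commute.neg_one_left ζ).orderOf_mul_eq_mul_orderOf_of_coprime] <;>
    rw [← h₂, ← h.eq_orderOf]
  exact Nat.coprime_two_left.mpr hk

theorem exists_int_abs_sub_mul_le {α : Type*} [Field α] [LinearOrder α] [IsStrictOrderedRing α]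
    [FloorRing α] (x : α) {p : α} (hp : 0 < p) : ∃ k : ℤ, |x - k * p| ≤ p / 2 := by
  refine ⟨round (x / p), ?_⟩
  calc |x - round (x / p) * p| = |(x / p - round (x / p)) * p| := by
        rw [sub_mul, div_mul_cancel₀ _ hp.ne']
    _ = |x / p - round (x / p)| * p := by rw [abs_mul, abs_of_pos hp]
    _ ≤ 1 / 2 * p := mul_le_mul_of_nonneg_right (abs_sub_round _) hp.le
    _ = p / 2 := by ring

theorem norm_exp_mul_I_sub_ofReal_le_one {c r : ℝ} (hc : |c| ≤ π / 3) (hr₀ : 0 ≤ r)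
    (hr₁ : r ≤ 1) : ‖exp (c * I) - r‖ ≤ 1 := by
  have hcos : 1 / 2 ≤ Real.cos c := by
    rw [← Real.cos_abs, ← Real.cos_pi_div_three]
    exact Real.cos_le_cos_of_nonneg_of_le_pi (abs_nonneg c) (by linarith [Real.pi_pos]) hc
  have hsq : ‖exp (c * I) - r‖ ^ 2 = (Real.cos c - r) ^ 2 + Real.sin c ^ 2 := by
    rw [Complex.sq_norm, Complex.normSq_apply]
    simp only [sub_re, sub_im, exp_ofReal_mul_I_re, exp_ofReal_mul_I_im, ofReal_re, ofReal_im]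
    ring
  have hle : ‖exp (c * I) - r‖ ^ 2 ≤ 1 := by
    nlinarith [Real.sin_sq_add_cos_sq c]
  exact (sq_le_one_iff₀ (norm_nonneg _)).mp hle

theorem exists_pow_eq_one_norm_add_le_one {n : ℕ} (hn : 3 ≤ n) {w : ℂ} (hw : ‖w‖ ≤ 1) :
    ∃ u : ℂ, u ^ n = 1 ∧ ‖w + u‖ ≤ 1 := by
  have hn₀ : (0 : ℝ) < n := by positivity
  set θ := (-w).arg
  obtain ⟨k, hk⟩ := exists_int_abs_sub_mul_le θ (by positivity : 0 < 2 * π / n)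
  set φ : ℝ := k * (2 * π / n)
  refine ⟨exp (φ * I), ?_, ?_⟩
  · have : (n : ℂ) ≠ 0 := by exact_mod_cast hn₀.ne'
    rw [← exp_nat_mul, show (n : ℂ) * (φ * I) = k * (2 * π * I) by
      push_cast [φ]; field_simp]
    exact exp_int_mul_two_pi_mul_I k
  -- polar form `-w = ‖w‖ e^{iθ}`
  have hpolar : w + exp (φ * I) = exp (θ * I) * (exp ((φ - θ : ℝ) * I) - ‖w‖) := by
    have := norm_mul_exp_arg_mul_I (-w)
    rw [norm_neg] at this
    rw [mul_sub, ← exp_add, ofReal_sub, show (θ : ℂ) * I + (φ - θ) * I = φ * I by ring]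
    linear_combination this
  have hangle : |φ - θ| ≤ π / 3 := by
    rw [abs_sub_comm]
    refine hk.trans ?_
    rw [div_div, div_le_div_iff₀ (by positivity) (by positivity)]
    have : (3 : ℝ) ≤ n := by exact_mod_cast hn
    nlinarith [Real.pi_pos]
  rw [hpolar, norm_mul, norm_exp_ofReal_mul_I, one_mul]
  exact norm_exp_mul_I_sub_ofReal_le_one hangle (norm_nonneg w) hw

theorem IsPrimitiveRoot.exists_pow_norm_add_le_one {η : ℂ} {n : ℕ} (hη : IsPrimitiveRoot η n)
    (hn : 3 ≤ n) {w : ℂ} (hw : ‖w‖ ≤ 1) : ∃ i < n, ‖w + η ^ i‖ ≤ 1 := by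
  obtain ⟨u, hun, hu⟩ := exists_pow_eq_one_norm_add_le_one hn hw
  have : NeZero n := ⟨by omega⟩
  obtain ⟨i, hi, rfl⟩ := hη.eq_pow_of_pow_eq_one hun
  exact ⟨i, hi, hu⟩

theorem stmt_6_general (K : Type*) [Field K]
    (ζ : 𝓞 K) (hζ : IsPrimitiveRoot (ζ : K) 5)
    (ι σ : K →+* ℂ)
    (S : Set (𝓞 K)) (hS : S = {z : 𝓞 K | ‖σ (z : K)‖ ≤ 1})
    (z : 𝓞 K) (hz : z ∈ S) :
    (∃ j : ℕ, j ≤ 9 ∧ z + (-ζ ^ 3) ^ j ∈ S) ∧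
    (∃ z' ∈ S, z' ≠ z ∧ (z' - z) ^ 10 = 1 ∧
      ‖ι (z' : K) - ι (z : K)‖ = 1) := by
  subst hS
  have hσζ : IsPrimitiveRoot (σ ((-ζ ^ 3 : 𝓞 K) : K)) 10 := by
    simpa using ((hζ.map_of_injective σ.injective).pow_of_coprime 3 (by norm_num)).neg_of_odd 0
      (by norm_num) (by decide)
  have hη : IsPrimitiveRoot (-ζ ^ 3) 10 :=
    hσζ.of_map_of_injective (f := σ.comp (algebraMap (𝓞 K) K))
      (σ.injective.comp RingOfIntegers.coe_injective)
  obtain ⟨i, hi, hle⟩ := hσζ.exists_pow_norm_add_le_one (by norm_num) hz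
  have hmem : z + (-ζ ^ 3) ^ i ∈ {z : 𝓞 K | ‖σ (z : K)‖ ≤ 1} := by simpa using hle
  have hroot : ((-ζ ^ 3) ^ i) ^ 10 = 1 := by rw [pow_right_comm, hη.pow_eq_one, one_pow]
  refine ⟨⟨i, by omega, hmem⟩, z + (-ζ ^ 3) ^ i, hmem, ?_, by simpa using hroot, ?_⟩
  · simpa using pow_ne_zero i (hη.ne_zero (by norm_num))
  · refine Complex.norm_eq_one_of_pow_eq_one ?_ (by norm_num : 10 ≠ 0)
    simp only [RingOfIntegers.coe_eq_algebraMap, ← map_sub, ← map_pow, add_sub_cancel_left,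
      hroot, map_one]

/-- For `K = ℚ(ζ₅)`, embeddings `ι, σ` as in the paper, and `S = {z ∈ 𝓞 | |σ z| ≤ 1}`:
for every `z ∈ S` there exists `0 ≤ j ≤ 9` with `z + (-ζ₅ ^ 3) ^ j ∈ S`; in particular there
is `z' ∈ S`, `z' ≠ z`, with `z' - z` a tenth root of unity, so `|ι z' - ι z| = 1`. -/
theorem stmt_6 (K : Type*) [Field K] [NumberField K] [IsCyclotomicExtension {5} ℚ K]
    (ζ : 𝓞 K) (hζ : IsPrimitiveRoot (ζ : K) 5)
    (ι σ : K →+* ℂ)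
    (hι : ι (ζ : K) = Complex.exp (2 * Real.pi * Complex.I / 5))
    (hσ : σ (ζ : K) = Complex.exp (4 * Real.pi * Complex.I / 5))
    (S : Set (𝓞 K)) (hS : S = {z : 𝓞 K | ‖σ (z : K)‖ ≤ 1})
    (z : 𝓞 K) (hz : z ∈ S) :
    (∃ j : ℕ, j ≤ 9 ∧ z + (-ζ ^ 3) ^ j ∈ S) ∧
    (∃ z' ∈ S, z' ≠ z ∧ (z' - z) ^ 10 = 1 ∧
      ‖ι (z' : K) - ι (z : K)‖ = 1) :=
  stmt_6_general K ζ hζ ι σ S hS z hz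
end

section
/- Let K = ℚ(ζ₅) with ring of integers 𝓞, let ι : K → ℂ be the embedding with ι(ζ₅) = exp(2πi/5) and σ : K → ℂ the embedding with σ(ζ₅) = exp(4πi/5), and let S = {z ∈ 𝓞 : |σ(z)| ≤ 1}. For every z ∈ S there exists z' ∈ S with z' ≠ z and |ι(z') − ι(z)| ≤ 1; in other words, the minimum distance from ι(z) to the rest of ι(S) is at most 1. -/
/-!
Every fifth root of unity `u` has a preimage `ζ ^ m ∈ 𝓞` under `σ`, and `ι (ζ ^ m)` has absolute
value `1`. So it suffices to find, for `w = σ z` in the closed unit disc, a fifth root of unity `u`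
with `|w + u| ≤ 1`, and take `z' = z + ζ ^ m`. Such a `u` exists for `n`-th roots of unity as soon
as `n ≥ 3`: some `-u` lies within angle `π / n ≤ π / 3` of `w`, and a point of the unit disc is at
distance at most `1` from every point of the unit circle within angle `π / 3` of it.
-/

open NumberField Complex
open scoped Real

lemma norm_ofReal_mul_exp_sub_one_le_one {r α : ℝ} (hr₀ : 0 ≤ r) (hr₁ : r ≤ 1)
    (hα : 1 / 2 ≤ Real.cos α) : ‖(r : ℂ) * exp (α * I) - 1‖ ≤ 1 := by
  have hsq : ‖(r : ℂ) * exp (α * I) - 1‖ ^ 2 = r ^ 2 - 2 * r * Real.cos α + 1 := by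
    rw [← normSq_eq_norm_sq, normSq_apply]
    simp only [sub_re, sub_im, re_ofReal_mul, im_ofReal_mul, exp_ofReal_mul_I_re,
      exp_ofReal_mul_I_im, one_re, one_im]
    nlinarith [Real.sin_sq_add_cos_sq α]
  refine (sq_le_one_iff₀ (norm_nonneg _)).mp ?_
  nlinarith

lemma exists_int_one_half_le_cos_sub {n : ℕ} (hn : 3 ≤ n) (θ : ℝ) :
    ∃ k : ℤ, 1 / 2 ≤ Real.cos (θ - 2 * π * k / n) := by
  have hn₀ : (0 : ℝ) < n := by positivity
  have hn₃ : (3 : ℝ) ≤ n := by exact_mod_cast hn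
  refine ⟨round (n * θ / (2 * π)), ?_⟩
  set x := n * θ / (2 * π)
  have hθ : θ = 2 * π * x / n := by simp only [x]; field_simp
  have hdist : |θ - 2 * π * round x / n| ≤ π / 3 :=
    calc |θ - 2 * π * round x / n| = 2 * π / n * |x - round x| := by
          rw [hθ, ← sub_div, ← mul_sub, abs_div, abs_mul, abs_of_pos (by positivity : 0 < 2 * π),
            abs_of_pos hn₀]
          ring
      _ ≤ 2 * π / n * (1 / 2) := by gcongr; exact abs_sub_round x
      _ ≤ π / 3 := by
          rw [div_mul_eq_mul_div, div_le_div_iff₀ hn₀ (by norm_num)]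
          nlinarith [Real.pi_pos]
  rw [← Real.cos_abs, ← Real.cos_pi_div_three]
  exact Real.cos_le_cos_of_nonneg_of_le_pi (abs_nonneg _) (by linarith [Real.pi_pos]) hdist

lemma exists_pow_eq_one_norm_sub_le_one {n : ℕ} (hn : 3 ≤ n) {w : ℂ} (hw : ‖w‖ ≤ 1) :
    ∃ u : ℂ, u ^ n = 1 ∧ ‖w - u‖ ≤ 1 := by
  obtain ⟨k, hk⟩ := exists_int_one_half_le_cos_sub hn (arg w)
  set φ : ℝ := 2 * π * k / n
  refine ⟨exp (φ * I), ?_, ?_⟩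
  · rw [← exp_nat_mul, ← exp_int_mul_two_pi_mul_I k]
    congr 1
    have hn₀ : (n : ℂ) ≠ 0 := by exact_mod_cast (by omega : n ≠ 0)
    push_cast [φ]
    field_simp
  · have hw' : w - exp (φ * I) = exp (φ * I) * ((‖w‖ : ℂ) * exp ((arg w - φ : ℝ) * I) - 1) := by
      conv_lhs => rw [← norm_mul_exp_arg_mul_I w]
      rw [mul_sub, mul_left_comm, ← exp_add]
      push_cast
      ring_nf
    rw [hw', norm_mul, norm_exp_ofReal_mul_I, one_mul]
    exact norm_ofReal_mul_exp_sub_one_le_one (norm_nonneg w) hw hk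

theorem stmt_7_general (K : Type*) [Field K]
    (ζ : 𝓞 K) (hζ : IsPrimitiveRoot (ζ : K) 5)
    (ι σ : K →+* ℂ)
    (S : Set (𝓞 K)) (hS : S = {z : 𝓞 K | ‖σ (z : K)‖ ≤ 1})
    (z : 𝓞 K) (hz : z ∈ S) :
    ∃ z' ∈ S, z' ≠ z ∧ ‖ι (z' : K) - ι (z : K)‖ ≤ 1 := by
  subst hS
  obtain ⟨u, hu, hzu⟩ := exists_pow_eq_one_norm_sub_le_one (n := 5) (w := -σ z)
    (by norm_num) (by rwa [norm_neg])
  obtain ⟨m, -, hm⟩ := (hζ.map_of_injective σ.injective).eq_pow_of_pow_eq_one hu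
  refine ⟨z + ζ ^ m, ?_, ?_, ?_⟩
  · rw [Set.mem_ofPred_eq]
    push_cast
    rwa [map_add, map_pow, hm, ← norm_neg, neg_add']
  · simpa using pow_ne_zero m (hζ.ne_zero (by norm_num))
  · push_cast
    rw [map_add, add_sub_cancel_left, map_pow, norm_pow, (hζ.map_of_injective ι.injective).norm'_eq_one (by norm_num), one_pow]

/-- For `K = ℚ(ζ₅)`, embeddings `ι, σ` as in the paper, and `S = {z ∈ 𝓞 | |σ z| ≤ 1}`:
for every `z ∈ S` there exists `z' ∈ S` with `z' ≠ z` and `|ι z' - ι z| ≤ 1`. -/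
theorem stmt_7 (K : Type*) [Field K] [NumberField K] [IsCyclotomicExtension {5} ℚ K]
    (ζ : 𝓞 K) (hζ : IsPrimitiveRoot (ζ : K) 5)
    (ι σ : K →+* ℂ)
    (hι : ι (ζ : K) = Complex.exp (2 * Real.pi * Complex.I / 5))
    (hσ : σ (ζ : K) = Complex.exp (4 * Real.pi * Complex.I / 5))
    (S : Set (𝓞 K)) (hS : S = {z : 𝓞 K | ‖σ (z : K)‖ ≤ 1})
    (z : 𝓞 K) (hz : z ∈ S) :
    ∃ z' ∈ S, z' ≠ z ∧ ‖ι (z' : K) - ι (z : K)‖ ≤ 1 :=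
  stmt_7_general K ζ hζ ι σ S hS z hz
end

section
/- Let K = ℚ(ζ₅) be the fifth cyclotomic field with ring of integers 𝓞. If x ∈ 𝓞 is nonzero and is not a unit of 𝓞, then |N_{K/ℚ}(x)| ≥ 5. -/
set_option synthInstance.maxHeartbeats 1000000
set_option maxHeartbeats 1000000


open NumberField

/-- In the fifth cyclotomic field `K = ℚ(ζ₅)`: if `x ∈ 𝓞 K` is nonzero and not a unit,
then `|N_{K/ℚ}(x)| ≥ 5`. -/
theorem stmt_10 (K : Type*) [Field K] [NumberField K] [IsCyclotomicExtension {5} ℚ K]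
    (x : 𝓞 K) (hx : x ≠ 0) (hu : ¬ IsUnit x) :
    5 ≤ |Algebra.norm ℚ (x : K)| := by
  have hζK := IsCyclotomicExtension.zeta_spec 5 ℚ K
  set ζ : 𝓞 K := hζK.toInteger with hζdef
  have hζprim : IsPrimitiveRoot ζ 5 := hζK.toInteger_isPrimitiveRoot
  set m : ℕ := Ideal.absNorm (Ideal.span {x}) with hmdef
  have hmn : m = (Algebra.norm ℤ x).natAbs := Ideal.absNorm_span_singleton x
  -- reduce to showing `5 ≤ m`
  suffices h5m : 5 ≤ m by
    have hcoe : (Algebra.norm ℤ x : ℚ) = Algebra.norm ℚ (x : K) := Algebra.coe_norm_int x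
    rw [← hcoe, ← Int.cast_abs, Int.abs_eq_natAbs]
    exact_mod_cast (hmn ▸ h5m)
  by_contra hlt
  push_neg at hlt
  have hm0 : m ≠ 0 := by
    rw [hmdef, Ne, Ideal.absNorm_eq_zero_iff, Ideal.span_singleton_eq_bot]
    exact hx
  have hmtop : (Ideal.span {x} : Ideal (𝓞 K)) ≠ ⊤ := by
    rw [Ne, Ideal.span_singleton_eq_top]
    exact hu
  obtain ⟨P, hPmax, hPle⟩ := Ideal.exists_le_maximal _ hmtop
  have hqdvd : Ideal.absNorm P ∣ m := Ideal.absNorm_dvd_absNorm_of_le hPle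
  set q : ℕ := Ideal.absNorm P with hqdef
  have hq0 : q ≠ 0 := fun h => hm0 (Nat.eq_zero_of_zero_dvd (h ▸ hqdvd))
  have hq1 : q ≠ 1 := by
    rw [hqdef, Ne, Ideal.absNorm_eq_one_iff]
    exact hPmax.ne_top
  have hq4 : q ≤ 4 := by
    have := Nat.le_of_dvd (Nat.pos_of_ne_zero hm0) hqdvd
    omega
  -- the residue field
  have hfin : Finite (𝓞 K ⧸ P) := (Ideal.absNorm_ne_zero_iff P).mp hq0
  letI : Fintype (𝓞 K ⧸ P) := Fintype.ofFinite _
  letI : Field (𝓞 K ⧸ P) := Ideal.Quotient.field P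
  have hcard : Fintype.card (𝓞 K ⧸ P) = q := by
    rw [hqdef, Ideal.absNorm_apply, Submodule.cardQuot_apply, Nat.card_eq_fintype_card]
  set z : 𝓞 K ⧸ P := Ideal.Quotient.mk P ζ with hzdef
  have hz5 : z ^ 5 = 1 := by
    rw [hzdef, ← map_pow, hζprim.pow_eq_one, map_one]
  by_cases hz1 : z = 1
  · -- residue characteristic 5 : contradiction with q ≤ 4
    have hgeom : (∑ i ∈ Finset.range 5, ζ ^ i) = 0 := hζprim.geom_sum_eq_zero (by norm_num)
    have h5F : ((5 : ℕ) : 𝓞 K ⧸ P) = 0 := by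
      have h := congrArg (Ideal.Quotient.mk P) hgeom
      simp only [map_sum, map_pow, map_zero, ← hzdef, hz1, one_pow, Finset.sum_const,
        Finset.card_range, nsmul_eq_mul, mul_one] at h
      exact_mod_cast h
    have hchar5 : ringChar (𝓞 K ⧸ P) ∣ 5 := (CharP.cast_eq_zero_iff _ _ _).mp h5F
    have hcharq : ringChar (𝓞 K ⧸ P) ∣ q := by
      have := FiniteField.cast_card_eq_zero (𝓞 K ⧸ P)
      rw [hcard] at this
      exact (CharP.cast_eq_zero_iff _ _ _).mp this
    have hchar1 : ringChar (𝓞 K ⧸ P) ≠ 1 := CharP.ringChar_ne_one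
    have : ringChar (𝓞 K ⧸ P) = 5 := by
      rcases (Nat.prime_five).eq_one_or_self_of_dvd _ hchar5 with h | h
      · exact absurd h hchar1
      · exact h
    rw [this] at hcharq
    omega
  · -- `z` has order 5 in the unit group : contradiction with q ≤ 4
    letI : Fintype ((𝓞 K ⧸ P)ˣ) := Fintype.ofFinite _
    have hzu : IsUnit z := IsUnit.of_pow_eq_one hz5 (by norm_num)
    have hord : orderOf z ∣ 5 := orderOf_dvd_of_pow_eq_one hz5
    have hord5 : orderOf z = 5 := by
      rcases (Nat.prime_five).eq_one_or_self_of_dvd _ hord with h | h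
      · exact absurd (orderOf_eq_one_iff.mp h) hz1
      · exact h
    have hcardu : orderOf hzu.unit ∣ Fintype.card ((𝓞 K ⧸ P)ˣ) := orderOf_dvd_card
    have hou : orderOf hzu.unit = 5 := by
      rw [← orderOf_units, IsUnit.unit_spec, hord5]
    rw [hou, Fintype.card_eq_nat_card, Nat.card_units, Nat.card_eq_fintype_card, hcard] at hcardu
    omega
end

section
/- Let K = ℚ(ζ₅) be the fifth cyclotomic field with ring of integers 𝓞. For every unit u of 𝓞 and every field embedding τ : K → ℂ, there exists an integer n ∈ ℤ such that |τ(u)| = ((1 + √5)/2)^n. -/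
/-!
Let `σ` be the automorphism `ζ ↦ ζ²`: it generates `Gal(K/ℚ)`, and `σ²` is complex conjugation
under every embedding `τ`. For a unit `w`, the reals `x = |τ w|²` and `x' = |τ (σ w)|²` are the
images of `w · σ² w` and of its `σ`-conjugate, so their sum and product are `σ`-invariant algebraic
integers, hence rational integers; the product is `|N w| = 1`, so `x + x⁻¹ ∈ ℤ`. When
`1 ≤ |τ w| < φ` this forces `x + x⁻¹ = 2`, i.e. `|τ w| = 1`. Finally `1 + ζ + ζ⁴` is a unit with
`τ`-image `φ` or `-φ⁻¹`, so dividing `u` by a power of a unit `η` with `|τ η| = φ` brings `|τ u|`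
into `[1, φ)`.
-/

open NumberField IsCyclotomicExtension IsCyclotomicExtension.Rat ComplexConjugate
open scoped goldenRatio

lemma Real.eq_one_of_add_inv_eq_intCast {x : ℝ} {t : ℤ} (ht : x + x⁻¹ = t) (h1 : 1 ≤ x)
    (h2 : x < φ ^ 2) : x = 1 := by
  have hquad : x ^ 2 + 1 = t * x := by
    field_simp at ht
    linear_combination ht
  have ht1 : (1 : ℝ) < t := by nlinarith
  -- `x ↦ x + x⁻¹` maps `[1, φ²)` into `[2, 3)`, as `φ² + φ⁻² = 3`
  have ht3 : (t : ℝ) < 3 := by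
    have hφ : φ ^ 2 = φ + 1 := Real.goldenRatio_sq
    have : 0 < (φ ^ 2 - x) * (x - (2 - φ)) :=
      mul_pos (by linarith) (by linarith [Real.one_lt_goldenRatio])
    nlinarith
  obtain rfl : t = 2 := by
    have : 1 < t ∧ t < 3 := ⟨by exact_mod_cast ht1, by exact_mod_cast ht3⟩
    omega
  have : (x - 1) ^ 2 = 0 := by push_cast at hquad; linear_combination hquad
  linarith [pow_eq_zero_iff (n := 2) two_ne_zero |>.mp this]

namespace IsCyclotomicExtension.Rat.Five

variable (K : Type*) [Field K] [NumberField K] [IsCyclotomicExtension {5} ℚ K]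

noncomputable def autSq : Gal(K/ℚ) :=
  (galEquivZMod 5 K).symm (ZMod.unitOfCoprime 2 (by norm_num))

local notation "σ" => autSq K

local notation "ζ" => zeta 5 ℚ K

lemma autSq_zeta : σ ζ = ζ ^ 2 := by
  rw [galEquivZMod_apply_of_pow_eq 5 K σ ((zeta_spec 5 ℚ K).pow_eq_one), autSq,
    MulEquiv.apply_symm_apply]
  rfl

lemma autSq_pow_four : σ ^ 4 = 1 := by
  rw [autSq, ← map_pow, (galEquivZMod 5 K).symm_apply_eq, map_one]
  decide

lemma autSq_apply_four (y : K) : σ (σ (σ (σ y))) = y := by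
  simpa only [pow_succ, pow_zero, one_mul, AlgEquiv.mul_apply, AlgEquiv.one_apply] using
    DFunLike.congr_fun (autSq_pow_four K) y

lemma zpowers_autSq : Subgroup.zpowers σ = ⊤ := by
  refine Subgroup.eq_top_iff' _ |>.mpr fun g ↦ ?_
  obtain ⟨j, hj⟩ : ∃ j : Fin 4,
      ZMod.unitOfCoprime 2 (by norm_num) ^ (j : ℕ) = galEquivZMod 5 K g := by
    generalize galEquivZMod 5 K g = a
    revert a
    decide
  refine ⟨j, ?_⟩
  change σ ^ ((j : ℕ) : ℤ) = g
  rw [zpow_natCast, autSq, ← map_pow, hj, MulEquiv.symm_apply_apply]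

lemma exists_intCast_eq_of_autSq_apply_eq {y : K} (hy : IsIntegral ℤ y) (hσ : σ y = y) :
    ∃ n : ℤ, y = n := by
  have hfix : ∀ g : Gal(K/ℚ), g y = y := by
    have : Subgroup.zpowers σ ≤ MulAction.stabilizer Gal(K/ℚ) y :=
      Subgroup.zpowers_le.mpr hσ
    intro g
    exact this (zpowers_autSq K ▸ Subgroup.mem_top g)
  have := IsCyclotomicExtension.isGalois {5} ℚ K
  obtain ⟨q, rfl⟩ := (IsGalois.mem_range_algebraMap_iff_fixed y).mpr hfix
  obtain ⟨n, rfl⟩ := IsIntegrallyClosed.isIntegral_iff.mp <|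
    (isIntegral_algebraMap_iff (algebraMap ℚ K).injective).mp hy
  exact ⟨n, by simp⟩

lemma apply_autSq_autSq (τ : K →+* ℂ) (y : K) : τ (σ (σ y)) = conj (τ y) := by
  have hζ := zeta_spec 5 ℚ K
  have hτζ : IsPrimitiveRoot (τ ζ) 5 := hζ.map_of_injective τ.injective
  have key : (τ.comp (σ * σ : Gal(K/ℚ)).toRingHom).toRatAlgHom =
      ((starRingEnd ℂ).comp τ).toRatAlgHom := by
    refine (hζ.powerBasis ℚ).algHom_ext ?_
    rw [IsPrimitiveRoot.powerBasis_gen]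
    change τ (σ (σ ζ)) = conj (τ ζ)
    rw [← Complex.inv_eq_conj (hτζ.norm'_eq_one (by norm_num)), autSq_zeta, map_pow, autSq_zeta,
      ← pow_mul, map_pow]
    refine eq_inv_of_mul_eq_one_left ?_
    rw [← pow_succ, hτζ.pow_eq_one]
  exact DFunLike.congr_fun key y

lemma ofReal_sq_norm (τ : K →+* ℂ) (y : K) : ((‖τ y‖ ^ 2 : ℝ) : ℂ) = τ (y * σ (σ y)) := by
  rw [map_mul, apply_autSq_autSq, Complex.mul_conj', Complex.ofReal_pow]

lemma isIntegral_autSq {y : K} (hy : IsIntegral ℤ y) : IsIntegral ℤ (σ y) :=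
  hy.map (σ : K →+* K).toIntAlgHom

lemma exists_intCast_eq_add_autSq_and_mul_autSq {a : K} (ha : IsIntegral ℤ a)
    (h : σ (σ a) = a) : (∃ t : ℤ, a + σ a = t) ∧ ∃ n : ℤ, a * σ a = n := by
  have hσa := isIntegral_autSq K ha
  refine ⟨exists_intCast_eq_of_autSq_apply_eq K (ha.add hσa) ?_,
    exists_intCast_eq_of_autSq_apply_eq K (ha.mul hσa) ?_⟩
  · rw [map_add, h, add_comm]
  · rw [map_mul, h, mul_comm]

lemma exists_sq_norm_add_and_mul_eq_intCast (τ : K →+* ℂ) {y : K} (hy : IsIntegral ℤ y) :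
    (∃ t : ℤ, ‖τ y‖ ^ 2 + ‖τ (σ y)‖ ^ 2 = t) ∧ ∃ n : ℤ, ‖τ y‖ ^ 2 * ‖τ (σ y)‖ ^ 2 = n := by
  have hσy := isIntegral_autSq K hy
  obtain ⟨⟨t, ht⟩, ⟨n, hn⟩⟩ := exists_intCast_eq_add_autSq_and_mul_autSq K
    (hy.mul (isIntegral_autSq K hσy)) (by simp only [map_mul, autSq_apply_four, mul_comm])
  have hσ : ((‖τ (σ y)‖ ^ 2 : ℝ) : ℂ) = τ (σ (y * σ (σ y))) := by
    rw [ofReal_sq_norm, map_mul σ]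
  refine ⟨⟨t, Complex.ofReal_injective ?_⟩, ⟨n, Complex.ofReal_injective ?_⟩⟩
  · rw [Complex.ofReal_add, ofReal_sq_norm, hσ, ← map_add, ht, map_intCast, Complex.ofReal_intCast]
  · rw [Complex.ofReal_mul, ofReal_sq_norm, hσ, ← map_mul, hn, map_intCast,
      Complex.ofReal_intCast]

lemma sq_norm_mul_sq_norm_autSq (τ : K →+* ℂ) (w : (𝓞 K)ˣ) :
    ‖τ w‖ ^ 2 * ‖τ (σ w)‖ ^ 2 = 1 := by
  obtain ⟨n, hn⟩ :=
    (exists_sq_norm_add_and_mul_eq_intCast K τ (RingOfIntegers.isIntegral_coe w.1)).2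
  obtain ⟨m, hm⟩ :=
    (exists_sq_norm_add_and_mul_eq_intCast K τ (RingOfIntegers.isIntegral_coe w⁻¹.1)).2
  have hw : ((w⁻¹ : (𝓞 K)ˣ) : K) = (w : K)⁻¹ := by simp
  have hpos : 0 < ‖τ w‖ ^ 2 * ‖τ (σ w)‖ ^ 2 := by
    have hw0 := Units.coe_ne_zero w
    have h1 : τ w ≠ 0 := (map_ne_zero τ).mpr hw0
    have h2 : τ (σ w) ≠ 0 := (map_ne_zero τ).mpr ((map_ne_zero σ).mpr hw0)
    exact mul_pos (pow_pos (norm_pos_iff.mpr h1) 2) (pow_pos (norm_pos_iff.mpr h2) 2)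
  simp only [hw, map_inv₀, norm_inv, inv_pow] at hm
  rw [← mul_inv, hn] at hm
  have hnm : n * m = 1 := by
    have : (n : ℝ) * m = 1 := by rw [← hm]; exact mul_inv_cancel₀ (hn ▸ hpos.ne')
    exact_mod_cast this
  rw [hn, Int.eq_one_of_mul_eq_one_right (by exact_mod_cast hn ▸ hpos.le) hnm, Int.cast_one]

lemma exists_sq_norm_add_inv_eq_intCast (τ : K →+* ℂ) (w : (𝓞 K)ˣ) :
    ∃ t : ℤ, ‖τ w‖ ^ 2 + (‖τ w‖ ^ 2)⁻¹ = t := by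
  rw [← eq_inv_of_mul_eq_one_right (sq_norm_mul_sq_norm_autSq K τ w)]
  exact (exists_sq_norm_add_and_mul_eq_intCast K τ (RingOfIntegers.isIntegral_coe w.1)).1

lemma norm_eq_one_of_one_le_of_lt_goldenRatio (τ : K →+* ℂ) (w : (𝓞 K)ˣ) (h1 : 1 ≤ ‖τ w‖)
    (h2 : ‖τ w‖ < φ) : ‖τ w‖ = 1 := by
  obtain ⟨t, ht⟩ := exists_sq_norm_add_inv_eq_intCast K τ w
  have := Real.eq_one_of_add_inv_eq_intCast ht (one_le_pow₀ h1)
    (pow_lt_pow_left₀ h2 (norm_nonneg _) two_ne_zero)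
  exact (pow_eq_one_iff_of_nonneg (norm_nonneg _) two_ne_zero).mp this

lemma exists_unit_norm_eq_goldenRatio (τ : K →+* ℂ) : ∃ η : (𝓞 K)ˣ, ‖τ η‖ = φ := by
  have hz := (zeta_spec 5 ℚ K).toInteger_isPrimitiveRoot
  set z := (zeta_spec 5 ℚ K).toInteger
  have hunit : (1 + z + z ^ 4) * (1 + z + z ^ 4 - 1) = 1 := by
    have hsum := hz.geom_sum_eq_zero (by norm_num)
    simp only [Finset.sum_range_succ, Finset.sum_range_zero] at hsum
    linear_combination hsum + (2 + z ^ 3) * hz.pow_eq_one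
  set ρ := τ.comp (algebraMap (𝓞 K) K)
  have hρ : ρ (1 + z + z ^ 4) * (ρ (1 + z + z ^ 4) - 1) = 1 := by
    simpa using congrArg ρ hunit
  have hφ : (φ : ℂ) * (φ - 1) = 1 := by
    have : φ * (φ - 1) = 1 := by linear_combination Real.goldenRatio_sq
    exact_mod_cast this
  have : (ρ (1 + z + z ^ 4) - φ) * (ρ (1 + z + z ^ 4) - 1 + φ) = 0 := by
    linear_combination hρ - hφ
  rcases mul_eq_zero.mp this with h | h
  · refine ⟨Units.mkOfMulEqOne _ _ hunit, ?_⟩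
    change ‖ρ (1 + z + z ^ 4)‖ = φ
    rw [sub_eq_zero.mp h, Complex.norm_real, Real.norm_of_nonneg Real.goldenRatio_pos.le]
  · refine ⟨Units.mkOfMulEqOne _ _ ((mul_comm _ _).trans hunit), ?_⟩
    change ‖ρ (1 + z + z ^ 4 - 1)‖ = φ
    rw [map_sub, map_one, eq_neg_of_add_eq_zero_left h, norm_neg, Complex.norm_real,
      Real.norm_of_nonneg Real.goldenRatio_pos.le]

end IsCyclotomicExtension.Rat.Five

open IsCyclotomicExtension.Rat.Five in
/-- For `K = ℚ(ζ₅)` with ring of integers `𝓞`: for every unit `u` of `𝓞` and every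
embedding `τ : K → ℂ`, there is `n : ℤ` with `|τ u| = ((1 + √5)/2) ^ n`. -/
theorem stmt_12 (K : Type*) [Field K] [NumberField K] [IsCyclotomicExtension {5} ℚ K]
    (u : (𝓞 K)ˣ) (τ : K →+* ℂ) :
    ∃ n : ℤ, ‖τ ((u : 𝓞 K) : K)‖ = ((1 + Real.sqrt 5) / 2) ^ n := by
  obtain ⟨η, hη⟩ := exists_unit_norm_eq_goldenRatio K τ
  have hu : 0 < ‖τ u‖ := norm_pos_iff.mpr ((map_ne_zero τ).mpr (Units.coe_ne_zero u))
  obtain ⟨n, hn⟩ := exists_mem_Ico_zpow hu Real.one_lt_goldenRatio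
  have hφn : 0 < φ ^ n := zpow_pos Real.goldenRatio_pos n
  have hscaled : ‖τ ↑(u * η ^ (-n))‖ = ‖τ u‖ / φ ^ n := by
    rw [Units.coe_mul, Units.coe_zpow, map_mul, map_zpow₀, norm_mul, norm_zpow, hη, zpow_neg,
      div_eq_mul_inv]
  have h1 := norm_eq_one_of_one_le_of_lt_goldenRatio K τ (u * η ^ (-n))
    (by rw [hscaled, one_le_div hφn]; exact hn.1)
    (by rw [hscaled, div_lt_iff₀ hφn, ← zpow_one_add₀ Real.goldenRatio_ne_zero, add_comm]
        exact hn.2)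
  exact ⟨n, (div_eq_one_iff_eq hφn.ne').mp (hscaled ▸ h1)⟩
end

section
/- Let K = ℚ(ζ₅) with ring of integers 𝓞, let ι : K → ℂ be the embedding with ι(ζ₅) = exp(2πi/5) and σ : K → ℂ the embedding with σ(ζ₅) = exp(4πi/5), and let S = {z ∈ 𝓞 : |σ(z)| ≤ 1}. Then the image ι(S) is a discrete subset of ℂ: every point of ℂ has a neighborhood containing at most one point of ι(S). -/
/-!
`K` is totally complex of degree 4, so it has exactly two infinite places, those of `ι` and `σ`;
they differ because `σ ζ = (ι ζ)²` is neither `ι ζ` nor its conjugate `(ι ζ)⁻¹`. The product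
formula then reads `|N a| = (|ι a| |σ a|)²`, hence `|ι a| |σ a| ≥ 1` for every nonzero integer `a`.
For distinct `z₁, z₂ ∈ S` we have `|σ (z₁ - z₂)| ≤ 2`, so `|ι z₁ - ι z₂| ≥ 1/2`.
-/

open NumberField InfinitePlace

theorem NumberField.InfinitePlace.mk_ne_mk_of_apply_eq_pow {K : Type*} [Field K] {n k : ℕ}
    [NeZero n] {μ : ℂ} (hμ : IsPrimitiveRoot μ n) {x : K} {φ ψ : K →+* ℂ} (hφ : φ x = μ)
    (hψ : ψ x = μ ^ k) (h₁ : ¬k ≡ 1 [MOD n]) (h₂ : ¬n ∣ k + 1) : mk φ ≠ mk ψ := by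
  rw [Ne, mk_eq_iff, not_or]
  constructor
  · rintro rfl
    rw [hφ, eq_comm, ← pow_one μ, ← pow_mul, one_mul,
      (hμ.isOfFinOrder (NeZero.ne n)).pow_eq_pow_iff_modEq, ← hμ.eq_orderOf] at hψ
    exact h₁ hψ
  · rintro rfl
    have hconj : μ⁻¹ = μ ^ k := by
      rw [Complex.inv_eq_conj (hμ.norm'_eq_one (NeZero.ne n)), ← hψ, ← hφ,
        ComplexEmbedding.conjugate_coe_eq]
    refine h₂ ((hμ.pow_eq_one_iff_dvd _).mp ?_)
    rw [pow_succ, ← hconj, inv_mul_cancel₀ (hμ.ne_zero (NeZero.ne n))]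

theorem IsCyclotomicExtension.Rat.card_infinitePlace {n : ℕ} [NeZero n] (K : Type*) [Field K]
    [NumberField K] [IsCyclotomicExtension {n} ℚ K] (hn : 2 < n) :
    Fintype.card (InfinitePlace K) = n.totient / 2 := by
  rw [card_eq_nrRealPlaces_add_nrComplexPlaces, nrRealPlaces_eq_zero K hn, zero_add,
    nrComplexPlaces_eq_totient_div_two n]

section NumberField

variable {K : Type*} [Field K] [NumberField K]

theorem NumberField.RingOfIntegers.one_le_abs_norm_s14 {a : 𝓞 K} (ha : a ≠ 0) :
    (1 : ℝ) ≤ |Algebra.norm ℚ (a : K)| := by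
  rw [← Algebra.coe_norm_int, ← Int.cast_one, ← Int.cast_abs, Rat.cast_intCast, Int.cast_le]
  exact Int.one_le_abs (Algebra.norm_ne_zero_iff.mpr ha)

section TwoComplexPlaces

variable [IsTotallyComplex K] (hcard : Fintype.card (InfinitePlace K) = 2)
include hcard

theorem mul_apply_sq_eq_abs_norm {v w : InfinitePlace K} (hvw : v ≠ w) (x : K) :
    (v x * w x) ^ 2 = |Algebra.norm ℚ x| := by
  classical
  have huniv : ({v, w} : Finset (InfinitePlace K)) = Finset.univ :=
    Finset.eq_univ_of_card _ (by rw [Finset.card_pair hvw, hcard])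
  rw [← prod_eq_abs_norm, ← huniv, Finset.prod_pair hvw, (IsTotallyComplex.isComplex v).mult_eq_two,
    (IsTotallyComplex.isComplex w).mult_eq_two, mul_pow]

theorem one_le_mul_apply {v w : InfinitePlace K} (hvw : v ≠ w) {a : 𝓞 K} (ha : a ≠ 0) :
    1 ≤ v a * w a := by
  have := (RingOfIntegers.one_le_abs_norm_s14 ha).trans_eq (mul_apply_sq_eq_abs_norm hcard hvw a).symm
  rwa [one_le_sq_iff_one_le_abs, abs_of_nonneg (by positivity)] at this

theorem inv_two_mul_le_norm_sub {φ ψ : K →+* ℂ} (hφψ : mk φ ≠ mk ψ) {r : ℝ} {z₁ z₂ : 𝓞 K}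
    (h₁ : ‖ψ z₁‖ ≤ r) (h₂ : ‖ψ z₂‖ ≤ r) (hne : z₁ ≠ z₂) : (2 * r)⁻¹ ≤ ‖φ z₁ - φ z₂‖ := by
  have key := one_le_mul_apply hcard hφψ (sub_ne_zero.mpr hne)
  push_cast [apply, map_sub] at key
  have hψ : ‖ψ z₁ - ψ z₂‖ ≤ 2 * r := (norm_sub_le _ _).trans (by linarith)
  have hr : 0 < 2 * r := by nlinarith [norm_nonneg (φ z₁ - φ z₂), norm_nonneg (ψ z₁ - ψ z₂)]
  rw [inv_le_iff_one_le_mul₀' hr]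
  nlinarith [norm_nonneg (φ z₁ - φ z₂)]

theorem exists_mem_nhds_subsingleton_inter_image {φ ψ : K →+* ℂ} (hφψ : mk φ ≠ mk ψ) {r : ℝ}
    (hr : 0 < r) (c : ℂ) :
    ∃ U ∈ nhds c, (U ∩ (fun z : 𝓞 K => φ z) '' {z | ‖ψ z‖ ≤ r}).Subsingleton := by
  refine ⟨Metric.ball c (4 * r)⁻¹, Metric.ball_mem_nhds c (by positivity), ?_⟩
  rintro _ ⟨hx, z₁, h₁, rfl⟩ _ ⟨hy, z₂, h₂, rfl⟩
  by_contra hne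
  have hsep := inv_two_mul_le_norm_sub hcard hφψ h₁ h₂ (by rintro rfl; exact hne rfl)
  have htri := dist_triangle_right (φ z₁) (φ z₂) c
  rw [Metric.mem_ball] at hx hy
  rw [dist_eq_norm] at htri
  have hhalf : (2 * r)⁻¹ = (4 * r)⁻¹ + (4 * r)⁻¹ := by field_simp; ring
  linarith

end TwoComplexPlaces

end NumberField

theorem stmt_14_general (K : Type*) [Field K] [NumberField K] [IsCyclotomicExtension {5} ℚ K]
    (ζ : 𝓞 K)
    (ι σ : K →+* ℂ)
    (hι : ι (ζ : K) = Complex.exp (2 * Real.pi * Complex.I / 5))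
    (hσ : σ (ζ : K) = Complex.exp (4 * Real.pi * Complex.I / 5))
    (S : Set (𝓞 K)) (hS : S = {z : 𝓞 K | ‖σ (z : K)‖ ≤ 1}) :
    ∀ c : ℂ, ∃ U ∈ nhds c, (U ∩ (fun z : 𝓞 K => ι (z : K)) '' S).Subsingleton := by
  have := IsCyclotomicExtension.Rat.isTotallyComplex (n := 5) K (by norm_num)
  have hcard : Fintype.card (InfinitePlace K) = 2 := by
    rw [IsCyclotomicExtension.Rat.card_infinitePlace (n := 5) K (by norm_num),
      Nat.totient_prime Nat.prime_five]
  have hμ := Complex.isPrimitiveRoot_exp 5 (by norm_num)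
  have hι' : ι ζ = Complex.exp (2 * Real.pi * Complex.I / (5 : ℕ)) := by rw [hι]; norm_num
  have hσ' : σ ζ = Complex.exp (2 * Real.pi * Complex.I / (5 : ℕ)) ^ 2 := by
    rw [hσ, ← Complex.exp_nat_mul]; push_cast; ring_nf
  have hισ := mk_ne_mk_of_apply_eq_pow hμ hι' hσ' (by decide) (by decide)
  exact hS ▸ exists_mem_nhds_subsingleton_inter_image hcard hισ one_pos

/-- For `K = ℚ(ζ₅)`, embeddings `ι, σ` as in the paper, and `S = {z ∈ 𝓞 | |σ z| ≤ 1}`: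
the image `ι '' S` is a discrete subset of `ℂ`, i.e. every point of `ℂ` has a
neighborhood containing at most one point of `ι '' S`. -/
theorem stmt_14 (K : Type*) [Field K] [NumberField K] [IsCyclotomicExtension {5} ℚ K]
    (ζ : 𝓞 K) (hζ : IsPrimitiveRoot (ζ : K) 5)
    (ι σ : K →+* ℂ)
    (hι : ι (ζ : K) = Complex.exp (2 * Real.pi * Complex.I / 5))
    (hσ : σ (ζ : K) = Complex.exp (4 * Real.pi * Complex.I / 5))
    (S : Set (𝓞 K)) (hS : S = {z : 𝓞 K | ‖σ (z : K)‖ ≤ 1}) :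
    ∀ c : ℂ, ∃ U ∈ nhds c, (U ∩ (fun z : 𝓞 K => ι (z : K)) '' S).Subsingleton :=
  stmt_14_general K ζ ι σ hι hσ S hS
end

section
/- Let K = ℚ(ζ₅) with ring of integers 𝓞, let ι : K → ℂ be the embedding with ι(ζ₅) = exp(2πi/5) and σ : K → ℂ the embedding with σ(ζ₅) = exp(4πi/5), and let S = {z ∈ 𝓞 : |σ(z)| ≤ 1}. If z₁, z₂ ∈ S, z₁ ≠ z₂, and z₁ − z₂ is a unit of 𝓞 with |ι(z₁) − ι(z₂)| ≤ 1, then |ι(z₁) − ι(z₂)| = ((√5 − 1)/2)^j for some integer j with 0 ≤ j ≤ 1, i.e., |ι(z₁) − ι(z₂)| ∈ {(√5 − 1)/2, 1}. -/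
/-!
Put `u = z₁ - z₂`, `a = |ι u|²`, `b = |σ u|²` and `w = u ū`. The complex embeddings of `K` are `ι`,
`σ` and their conjugates, so `N(u) = ab`, `Tr(w) = 2(a + b)` and `Tr(wθ) = 2(a - b) ι(θ)`, where
`θ = ζ - ζ² - ζ³ + ζ⁴` is the quadratic Gauss sum: `ι θ = -σ θ` is real with square `5`. Hence
`ab = 1`, and `n = Tr(w)`, `k = Tr(wθ)` are integers with `k² = 5(n² - 16)`. The bounds `a ≤ 1`
and `b ≤ 4` give `4 ≤ n ≤ 8`, and `5 ∣ k` forces `n² ≡ 16 (mod 5)`, so `n ∈ {4, 6}`, i.e.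
`a + b ∈ {2, 3}`, i.e. `a ∈ {1, ((√5 - 1)/2)²}`.
-/

open NumberField ComplexConjugate

/-- The quadratic Gauss sum `∑ₐ (a/5) ωᵃ`. -/
def gaussSumFive {R : Type*} [CommRing R] (ω : R) : R := ω - ω ^ 2 - ω ^ 3 + ω ^ 4

theorem map_gaussSumFive {R S : Type*} [CommRing R] [CommRing S] (f : R →+* S) (ω : R) :
    f (gaussSumFive ω) = gaussSumFive (f ω) := by
  simp [gaussSumFive]

theorem gaussSumFive_sq {R : Type*} [CommRing R] {ω : R} (hω : ω ^ 5 = 1) :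
    gaussSumFive (ω ^ 2) = -gaussSumFive ω := by
  unfold gaussSumFive
  linear_combination (ω ^ 3 - ω) * hω

namespace IsPrimitiveRoot

theorem sq_gaussSumFive {R : Type*} [CommRing R] [IsDomain R] {ω : R}
    (hω : IsPrimitiveRoot ω 5) : gaussSumFive ω ^ 2 = 5 := by
  have hsum : 1 + ω + ω ^ 2 + ω ^ 3 + ω ^ 4 = 0 := by
    simpa [Finset.sum_range_succ] using hω.geom_sum_eq_zero (by norm_num)
  unfold gaussSumFive
  linear_combination (4 - ω - 2 * ω ^ 2 + ω ^ 3) * hω.pow_eq_one - hsum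

variable {ω : ℂ} (hω : IsPrimitiveRoot ω 5)
include hω

theorem conj_eq_pow_four : conj ω = ω ^ 4 := by
  have hconj : ω * conj ω = 1 := by
    rw [Complex.mul_conj, Complex.normSq_eq_norm_sq, hω.norm'_eq_one (by norm_num)]
    simp
  apply mul_left_cancel₀ (hω.ne_zero (by norm_num))
  rw [hconj]
  linear_combination -hω.pow_eq_one

theorem conj_gaussSumFive : conj (gaussSumFive ω) = gaussSumFive ω := by
  simp only [gaussSumFive, map_add, map_sub, map_pow, hω.conj_eq_pow_four]
  linear_combination (ω * (ω ^ 10 + ω ^ 5 + 1) - ω ^ 3 - ω ^ 2 * (ω ^ 5 + 1)) * hω.pow_eq_one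

end IsPrimitiveRoot

theorem NumberField.algebraMap_trace_eq_sum_ringHom {K : Type*} [Field K] [NumberField K]
    (x : K) : algebraMap ℚ ℂ (Algebra.trace ℚ K x) = ∑ φ : K →+* ℂ, φ x :=
  (trace_eq_sum_embeddings (E := ℂ)).trans <|
    Fintype.sum_equiv (RingHom.equivRatAlgHom K ℂ).symm _ _ fun _ => rfl

theorem NumberField.algebraMap_norm_eq_prod_ringHom {K : Type*} [Field K] [NumberField K]
    (x : K) : algebraMap ℚ ℂ (Algebra.norm ℚ x) = ∏ φ : K →+* ℂ, φ x :=
  (Algebra.norm_eq_prod_embeddings ℚ ℂ x).trans <|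
    Fintype.prod_equiv (RingHom.equivRatAlgHom K ℂ).symm _ _ fun _ => rfl

namespace IsCyclotomicExtension.Rat.Five

open ComplexEmbedding

variable {K : Type*} [Field K] [NumberField K] [IsCyclotomicExtension {5} ℚ K]

instance : IsCMField K := isCMField K (S := {5}) ⟨5, Set.mem_singleton 5, by norm_num⟩

variable {ζ : K} (hζ : IsPrimitiveRoot ζ 5) {ι σ : K →+* ℂ} (hσ : σ ζ = ι ζ ^ 2)
include hζ hσ

theorem bijective_embeddings : Function.Bijective ![ι, σ, conjugate ι, conjugate σ] := by
  have hω := hζ.map_of_injective ι.injective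
  have hvals : ∀ i, ![ι, σ, conjugate ι, conjugate σ] i ζ = ι ζ ^ (![1, 2, 4, 3] i : ℕ) := by
    intro i
    fin_cases i <;> simp [conjugate_coe_eq, hσ, hω.conj_eq_pow_four]
    linear_combination ι ζ ^ 3 * hω.pow_eq_one
  refine (Fintype.bijective_iff_injective_and_card _).2 ⟨fun i j h => ?_, ?_⟩
  · have := hω.pow_inj (by fin_cases i <;> simp) (by fin_cases j <;> simp)
      ((hvals i).symm.trans ((congrArg (· ζ) h).trans (hvals j)))
    fin_cases i <;> fin_cases j <;> simp_all
  · rw [Embeddings.card, IsCyclotomicExtension.finrank (n := 5) K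
      (Polynomial.cyclotomic.irreducible_rat (by norm_num))]
    decide

theorem algebraMap_trace (x : K) :
    algebraMap ℚ ℂ (Algebra.trace ℚ K x) = ι x + σ x + conj (ι x) + conj (σ x) := by
  rw [algebraMap_trace_eq_sum_ringHom, ← (bijective_embeddings hζ hσ).sum_comp,
    Fin.sum_univ_four]
  rfl

theorem algebraMap_norm (x : K) :
    algebraMap ℚ ℂ (Algebra.norm ℚ x) = ι x * σ x * conj (ι x) * conj (σ x) := by
  rw [algebraMap_norm_eq_prod_ringHom, ← (bijective_embeddings hζ hσ).prod_comp,
    Fin.prod_univ_four]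
  rfl

theorem norm_sq_mul_norm_sq_eq_one {x : 𝓞 K} (hx : IsUnit x) :
    ‖ι x‖ ^ 2 * ‖σ x‖ ^ 2 = 1 := by
  have hN : ((Algebra.norm ℚ (x : K) : ℚ) : ℝ) = ‖ι x‖ ^ 2 * ‖σ x‖ ^ 2 := by
    apply Complex.ofReal_injective
    rw [Complex.ofReal_ratCast, ← eq_ratCast (algebraMap ℚ ℂ), algebraMap_norm hζ hσ]
    push_cast
    rw [← Complex.mul_conj', ← Complex.mul_conj']
    ring
  have hunit := NumberField.isUnit_iff_norm.mp hx
  rw [RingOfIntegers.coe_norm] at hunit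
  have hpos : (0 : ℝ) ≤ (Algebra.norm ℚ (x : K) : ℚ) := hN ▸ by positivity
  rw [← hN, ← abs_of_nonneg hpos, ← Rat.cast_abs, hunit, Rat.cast_one]

theorem algebraMap_trace_mul_conj_mul (x y : K) :
    algebraMap ℚ ℂ (Algebra.trace ℚ K (x * IsCMField.complexConj K x * y)) =
      ‖ι x‖ ^ 2 * (ι y + conj (ι y)) + ‖σ x‖ ^ 2 * (σ y + conj (σ y)) := by
  rw [algebraMap_trace hζ hσ]
  simp only [map_mul, IsCMField.complexEmbedding_complexConj, Complex.conj_conj]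
  rw [← Complex.mul_conj', ← Complex.mul_conj']
  ring

theorem exists_intCast_eq_mul_conj_mul (x y : 𝓞 K) :
    ∃ n : ℤ, (n : ℂ) = ‖ι x‖ ^ 2 * (ι y + conj (ι y)) + ‖σ x‖ ^ 2 * (σ y + conj (σ y)) := by
  refine ⟨Algebra.trace ℤ (𝓞 K) (x * IsCMField.ringOfIntegersComplexConj K x * y), ?_⟩
  rw [← algebraMap_trace_mul_conj_mul hζ hσ, ← Rat.cast_intCast, ← eq_ratCast (algebraMap ℚ ℂ),
    Algebra.coe_trace_int]
  simp

theorem exists_intCast_eq_two_mul_add (x : 𝓞 K) :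
    ∃ n : ℤ, (n : ℝ) = 2 * (‖ι x‖ ^ 2 + ‖σ x‖ ^ 2) := by
  obtain ⟨n, hn⟩ := exists_intCast_eq_mul_conj_mul hζ hσ x 1
  refine ⟨n, Complex.ofReal_injective ?_⟩
  rw [Complex.ofReal_intCast, hn]
  push_cast [map_one]
  ring

theorem exists_intCast_sq_eq (x : 𝓞 K) :
    ∃ k : ℤ, (k : ℝ) ^ 2 = 20 * (‖ι x‖ ^ 2 - ‖σ x‖ ^ 2) ^ 2 := by
  have hω := hζ.map_of_injective ι.injective
  have hθ : ((gaussSumFive hζ.toInteger : 𝓞 K) : K) = gaussSumFive ζ :=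
    map_gaussSumFive (algebraMap (𝓞 K) K) hζ.toInteger
  have hιθ : ι (gaussSumFive hζ.toInteger : 𝓞 K) = gaussSumFive (ι ζ) := by
    rw [hθ, map_gaussSumFive]
  have hσθ : σ (gaussSumFive hζ.toInteger : 𝓞 K) = -gaussSumFive (ι ζ) := by
    rw [hθ, map_gaussSumFive, hσ, gaussSumFive_sq hω.pow_eq_one]
  obtain ⟨k, hk⟩ := exists_intCast_eq_mul_conj_mul hζ hσ x (gaussSumFive hζ.toInteger)
  refine ⟨k, Complex.ofReal_injective ?_⟩
  rw [Complex.ofReal_pow, Complex.ofReal_intCast, hk, hιθ, hσθ, map_neg, hω.conj_gaussSumFive]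
  push_cast
  linear_combination (4 * ((‖ι x‖ : ℂ) ^ 2 - ‖σ x‖ ^ 2) ^ 2) * hω.sq_gaussSumFive

end IsCyclotomicExtension.Rat.Five

theorem Int.dvd_of_sq_eq_prime_mul {p : ℕ} (hp : p.Prime) {k m : ℤ} (hk : k ^ 2 = p * m) :
    (p : ℤ) ∣ m := by
  have hpk : (p : ℤ) ∣ k := Int.Prime.dvd_pow' hp ⟨_, hk⟩
  have hpp : (p * p : ℤ) ∣ p * m := hk ▸ pow_two k ▸ mul_dvd_mul hpk hpk
  exact Int.dvd_of_mul_dvd_mul_left (by exact_mod_cast hp.ne_zero) hpp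

theorem eq_sqrt_five_sub_one_div_two_or_eq_one {r s : ℝ} {n k : ℤ} (hr : 0 ≤ r) (hr1 : r ≤ 1)
    (hs0 : 0 ≤ s) (hs2 : s ≤ 2) (hrs : r ^ 2 * s ^ 2 = 1) (hn : (n : ℝ) = 2 * (r ^ 2 + s ^ 2))
    (hk : (k : ℝ) ^ 2 = 20 * (r ^ 2 - s ^ 2) ^ 2) :
    r = (√5 - 1) / 2 ∨ r = 1 := by
  have hr1' : r ^ 2 ≤ 1 := pow_le_one₀ hr hr1
  have hs1 : 1 ≤ s ^ 2 := by nlinarith [mul_le_mul_of_nonneg_right hr1' (sq_nonneg s)]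
  have hs4 : s ^ 2 ≤ 4 := by nlinarith
  have hkn : k ^ 2 = 5 * (n ^ 2 - 16) := by
    have : (k : ℝ) ^ 2 = 5 * ((n : ℝ) ^ 2 - 16) := by
      rw [hk, hn]
      linear_combination (-80) * hrs
    exact_mod_cast this
  have hn4 : 4 ≤ n := by
    have : (4 : ℝ) ≤ n := by nlinarith [sq_nonneg (r ^ 2 - s ^ 2)]
    exact_mod_cast this
  have hn8 : n ≤ 8 := by
    have : (n : ℝ) < 9 := by nlinarith [mul_nonneg (sub_nonneg.2 hs4) (sub_nonneg.2 hs1)]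
    exact Int.lt_add_one_iff.1 (by exact_mod_cast this)
  have h5 := Int.dvd_of_sq_eq_prime_mul Nat.prime_five hkn
  interval_cases n <;> norm_num at h5 <;> push_cast at hn
  · right
    have : r ^ 2 = 1 := by nlinarith [sq_nonneg (r ^ 2 - s ^ 2)]
    nlinarith
  · left
    have h5 : √5 ^ 2 = 5 := Real.sq_sqrt (by norm_num)
    have hg : 0 ≤ (√5 - 1) / 2 := by nlinarith [Real.sqrt_nonneg 5]
    have hfac : (r ^ 2 - ((√5 - 1) / 2) ^ 2) * (r ^ 2 - ((√5 + 1) / 2) ^ 2) = 0 := by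
      linear_combination (-r ^ 2 / 2) * hn - hrs + (-r ^ 2 / 2 + (√5 ^ 2 + 3) / 16) * h5
    rcases mul_eq_zero.1 hfac with h | h
    · exact (sq_eq_sq₀ hr hg).1 (sub_eq_zero.1 h)
    · nlinarith [Real.sqrt_nonneg 5]

open IsCyclotomicExtension.Rat.Five

theorem stmt_15_general (K : Type*) [Field K] [NumberField K] [IsCyclotomicExtension {5} ℚ K]
    (ζ : 𝓞 K) (hζ : IsPrimitiveRoot (ζ : K) 5)
    (ι σ : K →+* ℂ)
    (hι : ι (ζ : K) = Complex.exp (2 * Real.pi * Complex.I / 5))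
    (hσ : σ (ζ : K) = Complex.exp (4 * Real.pi * Complex.I / 5))
    (S : Set (𝓞 K)) (hS : S = {z : 𝓞 K | ‖σ (z : K)‖ ≤ 1})
    (z₁ z₂ : 𝓞 K) (h₁ : z₁ ∈ S) (h₂ : z₂ ∈ S)
    (hu : IsUnit (z₁ - z₂))
    (hle : ‖ι (z₁ : K) - ι (z₂ : K)‖ ≤ 1) :
    ‖ι (z₁ : K) - ι (z₂ : K)‖ = (Real.sqrt 5 - 1) / 2 ∨
      ‖ι (z₁ : K) - ι (z₂ : K)‖ = 1 := by
  have hσι : σ ζ = ι ζ ^ 2 := by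
    rw [hσ, hι, ← Complex.exp_nat_mul]
    ring_nf
  have hsub : ∀ φ : K →+* ℂ, φ ((z₁ - z₂ : 𝓞 K) : K) = φ z₁ - φ z₂ := fun φ => by
    push_cast
    rw [map_sub]
  have hσle : ‖σ ((z₁ - z₂ : 𝓞 K) : K)‖ ≤ 2 := by
    subst hS
    rw [hsub]
    linarith [norm_sub_le (σ z₁) (σ z₂), h₁.out, h₂.out]
  obtain ⟨n, hn⟩ := exists_intCast_eq_two_mul_add hζ hσι (z₁ - z₂)
  obtain ⟨k, hk⟩ := exists_intCast_sq_eq hζ hσι (z₁ - z₂)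
  rw [hsub] at hn hk
  exact eq_sqrt_five_sub_one_div_two_or_eq_one (norm_nonneg _) hle (norm_nonneg _) hσle
    (hsub ι ▸ norm_sq_mul_norm_sq_eq_one hζ hσι hu) hn hk

/-- For `K = ℚ(ζ₅)`, embeddings `ι, σ` as in the paper, and `S = {z ∈ 𝓞 | |σ z| ≤ 1}`:
if `z₁, z₂ ∈ S`, `z₁ ≠ z₂`, `z₁ - z₂` is a unit of `𝓞`, and `|ι z₁ - ι z₂| ≤ 1`, then
`|ι z₁ - ι z₂| ∈ {(√5 - 1)/2, 1}`. -/
theorem stmt_15 (K : Type*) [Field K] [NumberField K] [IsCyclotomicExtension {5} ℚ K]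
    (ζ : 𝓞 K) (hζ : IsPrimitiveRoot (ζ : K) 5)
    (ι σ : K →+* ℂ)
    (hι : ι (ζ : K) = Complex.exp (2 * Real.pi * Complex.I / 5))
    (hσ : σ (ζ : K) = Complex.exp (4 * Real.pi * Complex.I / 5))
    (S : Set (𝓞 K)) (hS : S = {z : 𝓞 K | ‖σ (z : K)‖ ≤ 1})
    (z₁ z₂ : 𝓞 K) (h₁ : z₁ ∈ S) (h₂ : z₂ ∈ S) (hne : z₁ ≠ z₂)
    (hu : IsUnit (z₁ - z₂))
    (hle : ‖ι (z₁ : K) - ι (z₂ : K)‖ ≤ 1) :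
    ‖ι (z₁ : K) - ι (z₂ : K)‖ = (Real.sqrt 5 - 1) / 2 ∨
      ‖ι (z₁ : K) - ι (z₂ : K)‖ = 1 :=
  stmt_15_general K ζ hζ ι σ hι hσ S hS z₁ z₂ h₁ h₂ hu hle
end
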